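/- arXiv:1707.03187 — 3 statements merged into one kernel-verified Lean document; each statement's English description precedes it below -/
import Mathlib

section
/- Let L and M be Fréchet spaces and f : L → M a continuous linear map whose image has finite codimension in M. Then the image of f is closed in M. -/
/-!
Choose a finite-dimensional complement `E` of `range f`. Then `(x, e) ↦ f x + e` is a continuous
linear surjection `L × E → M` between complete metrizable spaces, hence open by the open mapping
theorem: Baire category makes the closure of the image of every neighbourhood of `0` a
neighbourhood of `0`, and completeness of the source removes the closure by successive
approximation. An open surjection is a quotient map, and the preimage of `range f` is the closed
subspace `L × {0}`.
-/

open Filter Set Topology Pointwise Uniformity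

section Sequences

variable {P : Type*} [AddGroup P] {u : ℕ → Set P} {p : ℕ → P}

theorem sub_mem_of_succ_sub_mem (hu : ∀ n, 0 ∈ u n) (hadd : ∀ n, u (n + 1) + u (n + 1) ⊆ u n)
    (hp : ∀ n, p (n + 1) - p n ∈ u (n + 1)) (n m : ℕ) : p (n + m) - p n ∈ u n := by
  induction m generalizing n with
  | zero => simpa using hu n
  | succ m ih =>
    rw [← sub_add_sub_cancel _ (p (n + 1)), show n + (m + 1) = n + 1 + m by omega]
    exact hadd n (add_mem_add (ih (n + 1)) (hp n))

theorem cauchySeq_of_succ_sub_mem [UniformSpace P] [IsUniformAddGroup P]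
    (hu : (𝓝 0).HasAntitoneBasis u) (hadd : ∀ n, u (n + 1) + u (n + 1) ⊆ u n)
    (hp : ∀ n, p (n + 1) - p n ∈ u (n + 1)) : CauchySeq p :=
  hu.toHasBasis.uniformity_of_nhds_zero_swapped.cauchySeq_iff'.2 fun n _ =>
    ⟨n, fun k hk => by
      obtain ⟨m, rfl⟩ := Nat.exists_eq_add_of_le hk
      exact sub_mem_of_succ_sub_mem (fun n => mem_of_mem_nhds (hu.mem n)) hadd hp n m⟩

end Sequences

theorem Filter.Tendsto.closure_smallSets {X ι : Type*} [TopologicalSpace X] [RegularSpace X]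
    {x : X} {s : ι → Set X} {l : Filter ι} (h : Tendsto s l (𝓝 x).smallSets) :
    Tendsto (fun i => closure (s i)) l (𝓝 x).smallSets :=
  tendsto_smallSets_iff.2 fun t ht => by
    obtain ⟨c, hc, hcc, hct⟩ := exists_mem_nhds_isClosed_subset ht
    exact (tendsto_smallSets_iff.1 h c hc).mono fun i hi => (closure_minimal hi hcc).trans hct

theorem exists_sub_mem_closure_image {P Q : Type*} [AddCommGroup Q] [TopologicalSpace Q]
    [IsTopologicalAddGroup Q] {g : P → Q} {U V : Set P} {y : Q} (hy : y ∈ closure (g '' U))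
    (hV : closure (g '' V) ∈ 𝓝 0) : ∃ x ∈ U, y - g x ∈ closure (g '' V) := by
  have : {z | y - z ∈ closure (g '' V)} ∈ 𝓝 y :=
    (continuous_sub_left y).continuousAt.preimage_mem_nhds (by rwa [sub_self])
  obtain ⟨-, hz, x, hx, rfl⟩ := mem_closure_iff_nhds.1 hy _ this
  exact ⟨x, hx, hz⟩

section OpenMapping

variable {P Q G : Type*} [AddCommGroup P] [UniformSpace P] [IsUniformAddGroup P] [CompleteSpace P]
  [AddCommGroup Q] [TopologicalSpace Q] [IsTopologicalAddGroup Q] [T2Space Q]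
  [FunLike G P Q] [AddMonoidHomClass G P Q]

theorem closure_image_subset_image_closure_of_hasAntitoneBasis {g : G} (hg : Continuous g)
    (h : ∀ U ∈ 𝓝 (0 : P), closure (g '' U) ∈ 𝓝 0) {u : ℕ → Set P}
    (hu : (𝓝 0).HasAntitoneBasis u) (hadd : ∀ n, u (n + 1) + u (n + 1) ⊆ u n) :
    closure (g '' u 1) ⊆ g '' closure (u 0) := by
  intro y hy
  choose! d hd using fun k p (hp : y - g p ∈ closure (g '' u (k + 1))) =>
    exists_sub_mem_closure_image hp (h _ (hu.mem (k + 2)))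
  let p : ℕ → P := fun k => Nat.rec 0 (fun k pk => pk + d k pk) k
  have hp_succ (k : ℕ) : p (k + 1) = p k + d k (p k) := rfl
  have hp_approx (k : ℕ) : y - g (p k) ∈ closure (g '' u (k + 1)) := by
    induction k with
    | zero => simpa [p] using hy
    | succ k ih => simpa [hp_succ, map_add, sub_sub] using (hd k (p k) ih).2
  have hp_step (k : ℕ) : p (k + 1) - p k ∈ u (k + 1) := by
    simpa [hp_succ] using (hd k (p k) (hp_approx k)).1
  obtain ⟨x, hx⟩ := cauchySeq_tendsto_of_complete (cauchySeq_of_succ_sub_mem hu hadd hp_step)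
  refine ⟨x, mem_closure_of_tendsto hx (Eventually.of_forall fun k => ?_), ?_⟩
  · simpa [p] using
      sub_mem_of_succ_sub_mem (fun n => mem_of_mem_nhds (hu.mem n)) hadd hp_step 0 k
  have hsmall : Tendsto (fun k => closure (g '' u (k + 1))) atTop (𝓝 0).smallSets :=
    ((hg.tendsto' 0 0 (map_zero g)).image_smallSets.comp
      (hu.tendsto_smallSets.comp (tendsto_add_atTop_nat 1))).closure_smallSets
  have hlim : y - g x = 0 :=
    tendsto_nhds_unique (tendsto_const_nhds.sub ((hg.tendsto x).comp hx))
      (hsmall.of_smallSets (Eventually.of_forall hp_approx))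
  exact (sub_eq_zero.1 hlim).symm

theorem isOpenMap_of_closure_image_mem_nhds [FirstCountableTopology P] {g : G}
    (hg : Continuous g) (h : ∀ U ∈ 𝓝 (0 : P), closure (g '' U) ∈ 𝓝 0) : IsOpenMap g := by
  refine IsTopologicalAddGroup.isOpenMap_iff_nhds_zero.2 fun S hS => ?_
  obtain ⟨u, hu, hadd⟩ := IsTopologicalAddGroup.exists_antitone_basis_nhds_zero P
  obtain ⟨n, hn⟩ := hu.mem_iff.1 hS
  have hv : (𝓝 0).HasAntitoneBasis fun k => u (n + 1 + k) :=
    hu.comp_strictMono (strictMono_id.const_add (n + 1))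
  refine mem_of_superset (h _ (hu.mem (n + 2))) ?_
  calc closure (g '' u (n + 2)) ⊆ g '' closure (u (n + 1)) :=
        closure_image_subset_image_closure_of_hasAntitoneBasis hg h hv fun k => hadd _
    _ ⊆ g '' u n :=
        image_mono ((closure_subset_add_self_of_mem_nhds_zero (hu.mem _)).trans (hadd n))
    _ ⊆ S := image_subset_iff.2 hn

end OpenMapping

theorem IsClosed.interior_nonempty_of_absorbent {𝕜 E : Type*} [NontriviallyNormedField 𝕜]
    [AddCommGroup E] [Module 𝕜 E] [TopologicalSpace E] [ContinuousConstSMul 𝕜 E] [BaireSpace E]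
    {A : Set E} (hA : IsClosed A) (habs : Absorbent 𝕜 A) : (interior A).Nonempty := by
  obtain ⟨c, hc⟩ := NormedField.exists_one_lt_norm 𝕜
  have hc0 (n : ℕ) : c ^ n ≠ 0 := pow_ne_zero n (norm_pos_iff.1 (one_pos.trans hc))
  have hcover : ⋃ n : ℕ, c ^ n • A = univ := by
    refine eq_univ_of_forall fun x => mem_iUnion.2 ?_
    have hpow : Tendsto (c ^ ·) atTop (Bornology.cobounded 𝕜) := by
      simpa [← tendsto_norm_atTop_iff_cobounded] using tendsto_pow_atTop_atTop_of_one_lt hc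
    simpa using (hpow.eventually (habs x)).exists
  obtain ⟨n, hn⟩ :=
    nonempty_interior_of_iUnion_of_closed (fun n => hA.smul_of_ne_zero (hc0 n)) hcover
  rw [interior_smul₀ (hc0 n)] at hn
  exact smul_set_nonempty.1 hn

theorem sub_mem_nhds_zero_of_interior_nonempty {E : Type*} [AddCommGroup E] [TopologicalSpace E]
    [IsTopologicalAddGroup E] {A : Set E} (hA : (interior A).Nonempty) : A - A ∈ 𝓝 0 := by
  obtain ⟨a, ha⟩ := hA
  have : {z | a + z ∈ A} ∈ 𝓝 0 :=
    (continuous_const_add a).continuousAt.preimage_mem_nhds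
      (by rwa [add_zero, ← mem_interior_iff_mem_nhds])
  exact mem_of_superset this fun z hz =>
    ⟨a + z, hz, a, interior_subset ha, add_sub_cancel_left a z⟩

theorem LinearMap.closure_image_mem_nhds_zero {𝕜 E F : Type*} [NontriviallyNormedField 𝕜]
    [AddCommGroup E] [Module 𝕜 E] [TopologicalSpace E] [IsTopologicalAddGroup E]
    [ContinuousSMul 𝕜 E] [AddCommGroup F] [Module 𝕜 F] [TopologicalSpace F]
    [IsTopologicalAddGroup F] [ContinuousConstSMul 𝕜 F] [BaireSpace F] (g : E →ₗ[𝕜] F)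
    (hsurj : Function.Surjective g) {U : Set E} (hU : U ∈ 𝓝 0) : closure (g '' U) ∈ 𝓝 0 := by
  obtain ⟨V, hV, hVU⟩ : ∃ V ∈ 𝓝 (0 : E), ∀ v ∈ V, ∀ w ∈ V, v - w ∈ U := by
    have := (continuous_sub.tendsto' ((0 : E), (0 : E)) 0 (sub_zero 0)).eventually hU
    exact eventually_prod_self_iff.1 (by rwa [nhds_prod_eq] at this)
  have habs : Absorbent 𝕜 (closure (g '' V)) := by
    refine Absorbent.mono (fun y => ?_) subset_closure
    obtain ⟨x, rfl⟩ := hsurj y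
    filter_upwards [absorbent_nhds_zero hV x] with a ha
    obtain ⟨v, hv, hxv⟩ := ha rfl
    simpa [← hxv] using smul_mem_smul_set (a := a) (mem_image_of_mem g hv)
  refine mem_of_superset (sub_mem_nhds_zero_of_interior_nonempty
    (isClosed_closure.interior_nonempty_of_absorbent habs)) ?_
  rintro - ⟨a, ha, b, hb, rfl⟩
  refine map_mem_closure₂ continuous_sub ha hb ?_
  rintro - ⟨v, hv, rfl⟩ - ⟨w, hw, rfl⟩
  exact ⟨v - w, hVU v hv w hw, map_sub g v w⟩

theorem ContinuousLinearMap.isOpenMap_of_baireSpace {𝕜 E F : Type*} [NontriviallyNormedField 𝕜]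
    [AddCommGroup E] [Module 𝕜 E] [UniformSpace E] [IsUniformAddGroup E] [ContinuousSMul 𝕜 E]
    [CompleteSpace E] [FirstCountableTopology E] [AddCommGroup F] [Module 𝕜 F]
    [TopologicalSpace F] [IsTopologicalAddGroup F] [ContinuousConstSMul 𝕜 F] [T2Space F]
    [BaireSpace F] (g : E →L[𝕜] F) (hsurj : Function.Surjective g) : IsOpenMap g :=
  isOpenMap_of_closure_image_mem_nhds g.continuous fun _ =>
    (g : E →ₗ[𝕜] F).closure_image_mem_nhds_zero hsurj

theorem image_closed_of_finite_codimension_general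
    {L M : Type*}
    [AddCommGroup L] [Module ℝ L] [UniformSpace L] [IsUniformAddGroup L]
    [ContinuousSMul ℝ L] [CompleteSpace L]
    [TopologicalSpace.MetrizableSpace L]
    [AddCommGroup M] [Module ℝ M] [UniformSpace M] [IsUniformAddGroup M]
    [ContinuousSMul ℝ M] [CompleteSpace M]
    [TopologicalSpace.MetrizableSpace M]
    (f : L →L[ℝ] M)
    (hcodim : FiniteDimensional ℝ (M ⧸ LinearMap.range (f : L →ₗ[ℝ] M))) :
    IsClosed (Set.range f) := by
  obtain ⟨E, hE⟩ := (LinearMap.range (f : L →ₗ[ℝ] M)).exists_isCompl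
  have : FiniteDimensional ℝ E := (Submodule.quotientEquivOfIsCompl _ E hE).finiteDimensional
  have : IsUniformAddGroup E := E.toAddSubgroup.isUniformAddGroup
  have : CompleteSpace E := completeSpace_coe_iff_isComplete.2 E.complete_of_finiteDimensional
  have : FirstCountableTopology E := TopologicalSpace.Subtype.firstCountableTopology (E : Set M)
  -- makes the complete space `M` a Baire space
  have : (𝓤 M).IsCountablyGenerated := IsUniformAddGroup.uniformity_countably_generated
  let g : L × E →L[ℝ] M := f.coprod E.subtypeL
  have hsurj : Function.Surjective (g : L × E →ₗ[ℝ] M) := by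
    rw [← LinearMap.range_eq_top]
    simp [g, LinearMap.range_coprod, hE.sup_eq_top]
  have hpre : g ⁻¹' Set.range f = Prod.snd ⁻¹' {0} := by
    ext ⟨x, e⟩
    have hx : f x ∈ LinearMap.range (f : L →ₗ[ℝ] M) := LinearMap.mem_range_self _ x
    simpa [g] using (Submodule.add_mem_iff_right _ hx).trans
      (Submodule.mem_left_iff_eq_zero_of_disjoint hE.disjoint)
  have hquot := (g.isOpenMap_of_baireSpace hsurj).isQuotientMap g.continuous hsurj
  rw [← hquot.isClosed_preimage, hpre]
  exact isClosed_singleton.preimage continuous_snd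

/-- Let `L` and `M` be Fréchet spaces (complete metrizable locally
convex topological vector spaces over `ℝ`) and `f : L → M` a continuous linear map
whose image has finite codimension in `M` (i.e. `M ⧸ range f` is finite dimensional).
Then the image of `f` is closed in `M`. -/
theorem image_closed_of_finite_codimension
    {L M : Type*}
    [AddCommGroup L] [Module ℝ L] [UniformSpace L] [IsUniformAddGroup L]
    [ContinuousSMul ℝ L] [LocallyConvexSpace ℝ L] [CompleteSpace L]
    [TopologicalSpace.MetrizableSpace L]
    [AddCommGroup M] [Module ℝ M] [UniformSpace M] [IsUniformAddGroup M]
    [ContinuousSMul ℝ M] [LocallyConvexSpace ℝ M] [CompleteSpace M]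
    [TopologicalSpace.MetrizableSpace M]
    (f : L →L[ℝ] M)
    (hcodim : FiniteDimensional ℝ (M ⧸ LinearMap.range (f : L →ₗ[ℝ] M))) :
    IsClosed (Set.range f) :=
  image_closed_of_finite_codimension_general f hcodim
end

section
/- Let L and M be Fréchet spaces, f : L → M a continuous surjective linear map, and N a closed linear subspace of L of finite codimension. Then f(N) is closed in M. -/
/-!
The map `f` is open: by Baire's theorem the closure of the image of every neighbourhood of `0` is
a neighbourhood of `0`, and completeness of `L` lets one remove the closure by summing a series of
successive approximations. Hence `f` is a quotient map, so `f '' N` is closed as soon as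
`f ⁻¹' (f '' N) = N ⊔ ker f` is. That submodule contains `N`, so it is the preimage of a subspace of
the finite-dimensional Hausdorff space `L ⧸ N`, which is closed.
-/

open Filter Topology Set
open scoped Uniformity Pointwise

theorem Finset.sum_mem_of_add_self_subset {G : Type*} [AddCommMonoid G] {V : ℕ → Set G}
    (hzero : ∀ n, (0 : G) ∈ V n) (hadd : ∀ n, V (n + 1) + V (n + 1) ⊆ V n)
    {x : ℕ → G} (hx : ∀ i, x i ∈ V (i + 1)) {k : ℕ} {t : Finset ℕ} (ht : ∀ i ∈ t, k ≤ i) :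
    ∑ i ∈ t, x i ∈ V k := by
  have hanti : Antitone V := antitone_nat_of_succ_le fun n v hv => by
    have h := hadd n (Set.add_mem_add hv (hzero (n + 1)))
    rwa [add_zero] at h
  induction t using Finset.induction_on_min generalizing k with
  | empty => simpa using hzero k
  | insert a s has ih =>
    have hka : k ≤ a := ht a (Finset.mem_insert_self a s)
    rw [Finset.sum_insert fun ha => lt_irrefl a (has a ha)]
    have hka' : k + 1 ≤ a + 1 := by omega
    exact hadd k (Set.add_mem_add (hanti hka' (hx a)) (hanti hka' (ih fun i hi => has i hi)))

theorem tendsto_nhds_of_mem_closure_image {ι X Y : Type*} [TopologicalSpace X] [TopologicalSpace Y]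
    [RegularSpace Y] {l : Filter ι} {f : X → Y} {x : X} (hf : ContinuousAt f x)
    {V : ι → Set X} (hV : Tendsto V l (𝓝 x).smallSets) {r : ι → Y}
    (hr : ∀ i, r i ∈ closure (f '' V i)) : Tendsto r l (𝓝 (f x)) := by
  refine (closed_nhds_basis (f x)).tendsto_right_iff.2 fun O ⟨hO, hOc⟩ => ?_
  filter_upwards [tendsto_smallSets_iff.1 hV _ (hf hO)] with i hi
  exact closure_minimal (image_subset_iff.2 hi) hOc (hr i)

section AlmostOpen

variable {X Y F : Type*} [AddCommGroup X] [UniformSpace X] [IsUniformAddGroup X] [CompleteSpace X]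
  [AddCommGroup Y] [TopologicalSpace Y] [IsTopologicalAddGroup Y] [T2Space Y]
  [FunLike F X Y] [AddMonoidHomClass F X Y]

theorem closure_image_subset_image_closure_of_hasAntitoneBasis_s1 (T : F) (hTc : Continuous T)
    {V : ℕ → Set X} (hV : (𝓝 0).HasAntitoneBasis V) (hadd : ∀ n, V (n + 1) + V (n + 1) ⊆ V n)
    (hT : ∀ n, closure (T '' V n) ∈ 𝓝 0) : closure (T '' V 1) ⊆ T '' closure (V 0) := by
  intro y hy
  have hzero : ∀ n, (0 : X) ∈ V n := fun n => mem_of_mem_nhds (hV.mem n)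
  have step : ∀ n, ∀ r ∈ closure (T '' V (n + 1)),
      ∃ x ∈ V (n + 1), r - T x ∈ closure (T '' V (n + 2)) := by
    intro n r hr
    obtain ⟨_, ⟨x, hx, rfl⟩, hxr⟩ :=
      mem_closure_iff_nhds_zero.1 hr _ (neg_mem_nhds_zero _ (hT (n + 2)))
    exact ⟨x, hx, by simpa using hxr⟩
  -- Successive approximation: `x n ∈ V (n + 1)` is chosen so that the remainder
  -- `r (n + 1) = y - T (x 0 + ⋯ + x n)` lies in `closure (T '' V (n + 2))`; completeness makes
  -- `∑ x n` converge, and its sum is a preimage of `y`.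
  choose! g hg using step
  let r : ℕ → Y := fun n => Nat.rec y (fun n r => r - T (g n r)) n
  have hr : ∀ n, r n ∈ closure (T '' V (n + 1)) := fun n => by
    induction n with
    | zero => exact hy
    | succ n ih => exact (hg n (r n) ih).2
  set x : ℕ → X := fun n => g n (r n)
  have hx : ∀ n, x n ∈ V (n + 1) := fun n => (hg n (r n) (hr n)).1
  have hrx : ∀ n, r n = y - T (∑ i ∈ Finset.range n, x i) := fun n => by
    induction n with
    | zero => simp [r]
    | succ n ih =>
      rw [Finset.sum_range_succ, map_add, ← sub_sub, ← ih]
  obtain ⟨a, ha⟩ : Summable x := summable_iff_vanishing.2 fun e he => by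
    obtain ⟨k, hk⟩ := hV.mem_iff.1 he
    refine ⟨Finset.range k, fun t ht => hk ?_⟩
    exact Finset.sum_mem_of_add_self_subset hzero hadd hx fun i hi => by
      simpa using Finset.disjoint_left.1 ht hi
  have hpartial := ha.tendsto_sum_nat
  refine ⟨a, mem_closure_of_tendsto hpartial (Eventually.of_forall fun n =>
    Finset.sum_mem_of_add_self_subset hzero hadd hx fun i _ => Nat.zero_le i), ?_⟩
  have hr_lim : Tendsto r atTop (𝓝 (y - T a)) := by
    rw [funext hrx]
    exact tendsto_const_nhds.sub ((hTc.tendsto a).comp hpartial)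
  have hr_zero : Tendsto r atTop (𝓝 0) := by
    simpa using tendsto_nhds_of_mem_closure_image (hTc.continuousAt (x := 0))
      (hV.tendsto_smallSets.comp (tendsto_add_atTop_nat 1)) hr
  exact (sub_eq_zero.1 (tendsto_nhds_unique hr_lim hr_zero)).symm

theorem image_mem_nhds_zero_of_closure_image_mem_nhds [FirstCountableTopology X] (T : F)
    (hTc : Continuous T) (hT : ∀ U ∈ 𝓝 (0 : X), closure (T '' U) ∈ 𝓝 (0 : Y)) {U : Set X}
    (hU : U ∈ 𝓝 0) : T '' U ∈ 𝓝 0 := by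
  obtain ⟨u, hu, hadd⟩ := IsTopologicalAddGroup.exists_antitone_basis_nhds_zero X
  obtain ⟨k, hk⟩ := hu.mem_iff.1 hU
  have hW : (𝓝 0).HasAntitoneBasis fun n => u (k + 1 + n) :=
    hu.comp_mono (fun _ _ h => Nat.add_le_add_left h _)
      (tendsto_atTop_mono (fun n => Nat.le_add_left n _) tendsto_id)
  have hclosure : closure (u (k + 1)) ⊆ U :=
    (closure_subset_add_self_of_mem_nhds_zero (hu.mem _)).trans ((hadd k).trans hk)
  refine mem_of_superset (hT _ (hW.mem 1)) ?_
  refine (closure_image_subset_image_closure_of_hasAntitoneBasis_s1 T hTc hW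
    (fun n => hadd (k + 1 + n)) fun n => hT _ (hW.mem n)).trans (image_mono ?_)
  simpa using hclosure

theorem isOpenMap_of_closure_image_mem_nhds_s1 [FirstCountableTopology X] (T : F) (hTc : Continuous T)
    (hT : ∀ U ∈ 𝓝 (0 : X), closure (T '' U) ∈ 𝓝 (0 : Y)) : IsOpenMap T := by
  have hzero : 𝓝 0 ≤ map T (𝓝 0) :=
    le_map fun _ => image_mem_nhds_zero_of_closure_image_mem_nhds T hTc hT
  refine isOpenMap_iff_nhds_le.2 fun x => ?_
  calc 𝓝 (T x) = map (T x + ·) (𝓝 0) := by simp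
    _ ≤ map (T x + ·) (map T (𝓝 0)) := map_mono hzero
    _ = map T (𝓝 x) := by
      rw [← map_add_left_nhds_zero x, map_map, map_map]
      simp [Function.comp_def]

end AlmostOpen

theorem closure_image_mem_nhds_zero_of_surjective {X Y : Type*}
    [AddCommGroup X] [Module ℝ X] [TopologicalSpace X] [IsTopologicalAddGroup X]
    [ContinuousSMul ℝ X] [AddCommGroup Y] [Module ℝ Y] [TopologicalSpace Y]
    [IsTopologicalAddGroup Y] [ContinuousConstSMul ℝ Y] [BaireSpace Y]
    (T : X →ₗ[ℝ] Y) (hT : Function.Surjective T) {U : Set X} (hU : U ∈ 𝓝 0) :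
    closure (T '' U) ∈ 𝓝 0 := by
  obtain ⟨W, hW, -, hWneg, hWU⟩ := exists_closed_nhds_zero_neg_eq_add_subset hU
  have hcover : ⋃ n : ℕ, closure (((n : ℝ) + 1) • T '' W) = univ := by
    refine eq_univ_of_forall fun y => ?_
    obtain ⟨x, rfl⟩ := hT y
    have hsmall : Tendsto (fun n : ℕ => ((n : ℝ) + 1)⁻¹ • x) atTop (𝓝 0) := by
      simpa using (tendsto_one_div_add_atTop_nhds_zero_nat (𝕜 := ℝ)).smul_const x
    obtain ⟨n, hn⟩ := (hsmall.eventually_mem hW).exists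
    have hx : x = ((n : ℝ) + 1) • ((n : ℝ) + 1)⁻¹ • x := by
      rw [smul_inv_smul₀ (by positivity)]
    refine mem_iUnion.2 ⟨n, subset_closure ?_⟩
    rw [hx, map_smul]
    exact smul_mem_smul_set (mem_image_of_mem T hn)
  obtain ⟨n, hn⟩ := nonempty_interior_of_iUnion_of_closed (fun _ => isClosed_closure) hcover
  obtain ⟨y, hy⟩ : (interior (closure (T '' W))).Nonempty := by
    have hne : (n : ℝ) + 1 ≠ 0 := by positivity
    rw [closure_smul₀' hne, interior_smul₀ hne] at hn
    obtain ⟨_, y, hy, rfl⟩ := hn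
    exact ⟨y, hy⟩
  have hsub : T '' W - T '' W ⊆ T '' U := by
    rw [← Set.image_sub, sub_eq_add_neg, hWneg]
    exact image_mono hWU
  refine mem_of_superset (mem_interior_iff_mem_nhds.1
    (subset_interior_sub_left ⟨y, hy, y, interior_subset hy, sub_self y⟩)) ?_
  rintro _ ⟨a, ha, b, hb, rfl⟩
  exact map_mem_closure₂ continuous_sub ha hb
    fun a ha b hb => hsub (Set.sub_mem_sub ha hb)

theorem Submodule.isClosed_of_le_of_finiteDimensional_quotient {𝕜 E : Type*}
    [NontriviallyNormedField 𝕜] [CompleteSpace 𝕜] [AddCommGroup E] [Module 𝕜 E] [TopologicalSpace E]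
    [IsTopologicalAddGroup E] [ContinuousSMul 𝕜 E] {N P : Submodule 𝕜 E} (hN : IsClosed (N : Set E))
    [FiniteDimensional 𝕜 (E ⧸ N)] (hNP : N ≤ P) : IsClosed (P : Set E) := by
  have : IsClosed (N : Set E) := hN
  rw [← sup_eq_right.2 hNP, ← Submodule.comap_map_mkQ]
  exact (Submodule.closed_of_finiteDimensional (P.map N.mkQ)).preimage continuous_quot_mk

theorem image_of_closed_finite_codim_subspace_closed_general
    {L M : Type*}
    [AddCommGroup L] [Module ℝ L] [UniformSpace L] [IsUniformAddGroup L]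
    [ContinuousSMul ℝ L] [CompleteSpace L]
    [TopologicalSpace.MetrizableSpace L]
    [AddCommGroup M] [Module ℝ M] [UniformSpace M] [IsUniformAddGroup M]
    [ContinuousSMul ℝ M] [CompleteSpace M]
    [TopologicalSpace.MetrizableSpace M]
    (f : L →L[ℝ] M) (hf : Function.Surjective f)
    (N : Submodule ℝ L) (hNclosed : IsClosed (N : Set L))
    (hNcodim : FiniteDimensional ℝ (L ⧸ N)) :
    IsClosed (f '' (N : Set L)) := by
  have : (𝓤 M).IsCountablyGenerated := IsUniformAddGroup.uniformity_countably_generated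
  have hopen : IsOpenMap f := isOpenMap_of_closure_image_mem_nhds_s1 f f.continuous
    fun _ => closure_image_mem_nhds_zero_of_surjective (f : L →ₗ[ℝ] M) hf
  have hpreimage : f ⁻¹' (f '' N) = ↑(N ⊔ LinearMap.ker (f : L →ₗ[ℝ] M)) :=
    congrArg SetLike.coe (Submodule.comap_map_eq (f : L →ₗ[ℝ] M) N)
  rw [← (hopen.isQuotientMap f.continuous hf).isCoinducing.isClosed_preimage, hpreimage]
  exact Submodule.isClosed_of_le_of_finiteDimensional_quotient hNclosed le_sup_left

/-- Let `L` and `M` be Fréchet spaces, `f : L → M` a continuous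
surjective linear map, and `N ⊆ L` a closed linear subspace of finite codimension
(i.e. `L ⧸ N` is finite dimensional). Then `f(N)` is closed in `M`. -/
theorem image_of_closed_finite_codim_subspace_closed
    {L M : Type*}
    [AddCommGroup L] [Module ℝ L] [UniformSpace L] [IsUniformAddGroup L]
    [ContinuousSMul ℝ L] [LocallyConvexSpace ℝ L] [CompleteSpace L]
    [TopologicalSpace.MetrizableSpace L]
    [AddCommGroup M] [Module ℝ M] [UniformSpace M] [IsUniformAddGroup M]
    [ContinuousSMul ℝ M] [LocallyConvexSpace ℝ M] [CompleteSpace M]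
    [TopologicalSpace.MetrizableSpace M]
    (f : L →L[ℝ] M) (hf : Function.Surjective f)
    (N : Submodule ℝ L) (hNclosed : IsClosed (N : Set L))
    (hNcodim : FiniteDimensional ℝ (L ⧸ N)) :
    IsClosed (f '' (N : Set L)) :=
  image_of_closed_finite_codim_subspace_closed_general f hf N hNclosed hNcodim
end

section
/- Let E be a locally convex topological vector space, P ⊆ E' a closed convex cone in the dual with a compact convex basis P̃ (i.e. P̃ compact convex, 0 ∉ P̃, and P = ℝ≥0·P̃), and L ⊆ E' a closed linear subspace with L ∩ P̃ = ∅. Then there exists Ω ∈ E such that T(Ω) = 0 for all T ∈ L and T(Ω) > 0 for all T ∈ P̃. -/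
/-!
Apply the Hahn–Banach strict separation theorem in the weak-* dual, which is locally convex,
to the closed subspace `L` and the compact convex set `P̃`: the separating functional is bounded
above on `L`, hence vanishes there, and is bounded below on `P̃` by a positive constant. Every
weak-* continuous functional on `E'` is evaluation at a point `Ω ∈ E`.
-/

theorem Submodule.apply_eq_zero_of_forall_apply_lt {𝕜 M : Type*} [Field 𝕜] [LinearOrder 𝕜]
    [IsStrictOrderedRing 𝕜] [AddCommGroup M] [Module 𝕜 M] (L : Submodule 𝕜 M)
    (f : M →ₗ[𝕜] 𝕜) {u : 𝕜} (hf : ∀ b ∈ L, f b < u) : ∀ b ∈ L, f b = 0 := by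
  intro b hb
  by_contra hne
  have hlt := hf _ (L.smul_mem (u / f b) hb)
  rw [map_smul, smul_eq_mul, div_mul_cancel₀ _ hne] at hlt
  exact lt_irrefl u hlt

theorem exists_dual_eq_zero_on_submodule_pos_on_compact {F : Type*} [AddCommGroup F]
    [Module ℝ F] [TopologicalSpace F] [IsTopologicalAddGroup F] [ContinuousSMul ℝ F]
    [LocallyConvexSpace ℝ F] {K : Set F} (hKcompact : IsCompact K) (hKconv : Convex ℝ K)
    (L : Submodule ℝ F) (hLclosed : IsClosed (L : Set F)) (hdisj : Disjoint (L : Set F) K) :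
    ∃ f : StrongDual ℝ F, (∀ b ∈ L, f b = 0) ∧ ∀ a ∈ K, 0 < f a := by
  obtain ⟨f, u, v, hfL, huv, hfK⟩ :=
    geometric_hahn_banach_closed_compact L.convex hLclosed hKconv hKcompact hdisj
  have hf0 := L.apply_eq_zero_of_forall_apply_lt f.toLinearMap hfL
  have hu : 0 < u := by simpa [hf0 0 L.zero_mem] using hfL 0 L.zero_mem
  exact ⟨f, hf0, fun a ha => by linarith [hfK a ha]⟩

theorem separation_of_cone_basis_from_subspace_general
    {E : Type*} [AddCommGroup E] [Module ℝ E] [TopologicalSpace E]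
    (Pt : Set (WeakDual ℝ E))
    (hPtcompact : IsCompact Pt) (hPtconv : Convex ℝ Pt)
    (L : Submodule ℝ (WeakDual ℝ E))
    (hLclosed : IsClosed (L : Set (WeakDual ℝ E)))
    (hdisj : (L : Set (WeakDual ℝ E)) ∩ Pt = ∅) :
    ∃ Ω : E, (∀ T ∈ L, T Ω = 0) ∧ ∀ T ∈ Pt, 0 < T Ω := by
  have : LocallyConvexSpace ℝ (WeakDual ℝ E) := WeakBilin.locallyConvexSpace
  obtain ⟨f, hfL, hfPt⟩ := exists_dual_eq_zero_on_submodule_pos_on_compact hPtcompact hPtconv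
    L hLclosed (Set.disjoint_iff_inter_eq_empty.mpr hdisj)
  obtain ⟨Ω, rfl⟩ := LinearMap.dualEmbedding_surjective (topDualPairing ℝ E) f
  exact ⟨Ω, hfL, hfPt⟩

/-- Let `E` be a locally convex topological vector space, `P ⊆ E'`
a closed convex cone in the dual (with the weak-* topology) with a compact convex
basis `P̃` (so `P̃` is compact convex, `0 ∉ P̃`, and `P = ℝ≥0 · P̃`), and `L ⊆ E'` a
closed linear subspace with `L ∩ P̃ = ∅`. Then there exists `Ω ∈ E` such that
`T(Ω) = 0` for all `T ∈ L` and `T(Ω) > 0` for all `T ∈ P̃`. -/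
theorem separation_of_cone_basis_from_subspace
    {E : Type*} [AddCommGroup E] [Module ℝ E] [TopologicalSpace E]
    [IsTopologicalAddGroup E] [ContinuousSMul ℝ E] [LocallyConvexSpace ℝ E]
    (P Pt : Set (WeakDual ℝ E))
    (hPbasis : P = {x | ∃ c : ℝ, 0 ≤ c ∧ ∃ y ∈ Pt, x = c • y})
    (hPclosed : IsClosed P) (hPconv : Convex ℝ P)
    (hPtcompact : IsCompact Pt) (hPtconv : Convex ℝ Pt)
    (hPt0 : (0 : WeakDual ℝ E) ∉ Pt)
    (L : Submodule ℝ (WeakDual ℝ E))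
    (hLclosed : IsClosed (L : Set (WeakDual ℝ E)))
    (hdisj : (L : Set (WeakDual ℝ E)) ∩ Pt = ∅) :
    ∃ Ω : E, (∀ T ∈ L, T Ω = 0) ∧ ∀ T ∈ Pt, 0 < T Ω :=
  separation_of_cone_basis_from_subspace_general Pt hPtcompact hPtconv L hLclosed hdisj
end
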